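/- arXiv:1210.4668 — 4 statements merged into one kernel-verified Lean document; each statement's English description precedes it below -/
import Mathlib

section
/- Fix an integer m ≥ 1 and let Power(m) = (V, 2^V) be the power set hypergraph on V = {1, 2, …, m}, whose hyperedges are all nonempty subsets of V. Then the minimum weight of an edge-discriminator on Power(m) equals 2^m − 1: the labeling λ(i) = 2^{i−1} is an edge-discriminator of weight 2^m − 1, and every edge-discriminator on Power(m) has weight at least 2^m − 1. -/
/-- `lam` is an edge-discriminator on the hypergraph with hyperedge family `E`
(vertices are natural numbers). -/
def IsEdgeDiscriminator (E : Finset (Finset ℕ)) (lam : ℕ → ℕ) : Prop :=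
  (∀ e ∈ E, 0 < ∑ v ∈ e, lam v) ∧
  (∀ e ∈ E, ∀ f ∈ E, e ≠ f → ∑ v ∈ e, lam v ≠ ∑ v ∈ f, lam v)

/-- The power set hypergraph on `{1, …, m}`: all nonempty subsets. -/
def powerEdges (m : ℕ) : Finset (Finset ℕ) :=
  (Finset.Icc 1 m).powerset.filter (fun e => e.Nonempty)

/-! The labels `2 ^ (i - 1)` turn the weight of a set into its binary encoding, so distinct sets
get distinct weights, and the total weight is `2 ^ m - 1`. Conversely, the `2 ^ m - 1` hyperedges
of an edge-discriminator carry pairwise distinct weights in `[1, ω(V)]`, so `ω(V) ≥ 2 ^ m - 1`. -/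

open Finset

lemma mem_powerEdges {m : ℕ} {e : Finset ℕ} :
    e ∈ powerEdges m ↔ e ⊆ Icc 1 m ∧ e.Nonempty := by
  simp [powerEdges]

lemma card_powerEdges (m : ℕ) : #(powerEdges m) = 2 ^ m - 1 := by
  have : powerEdges m = (Icc 1 m).powerset.erase ∅ := by
    ext e
    simp [powerEdges, nonempty_iff_ne_empty, and_comm]
  rw [this, card_erase_of_mem (empty_mem_powerset _), card_powerset, Nat.card_Icc,
    Nat.add_sub_cancel]

lemma sum_Icc_two_pow_pred (m : ℕ) : ∑ v ∈ Icc 1 m, 2 ^ (v - 1) = 2 ^ m - 1 := by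
  rw [← Ico_add_one_right_eq_Icc, sum_Ico_eq_sum_range, Nat.add_sub_cancel]
  simp only [Nat.add_sub_cancel_left]
  rw [Nat.geomSum_eq le_rfl]
  simp

lemma two_mul_sum_two_pow_pred {e : Finset ℕ} (he : 0 ∉ e) :
    2 * ∑ v ∈ e, 2 ^ (v - 1) = ∑ v ∈ e, 2 ^ v := by
  rw [mul_sum]
  refine sum_congr rfl fun v hv => ?_
  obtain ⟨k, rfl⟩ := Nat.exists_eq_succ_of_ne_zero (ne_of_mem_of_not_mem hv he)
  simp [pow_succ, mul_comm]

lemma isEdgeDiscriminator_two_pow_pred {E : Finset (Finset ℕ)}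
    (hne : ∀ e ∈ E, e.Nonempty) (hzero : ∀ e ∈ E, 0 ∉ e) :
    IsEdgeDiscriminator E (fun v => 2 ^ (v - 1)) := by
  refine ⟨fun e he => sum_pos (fun _ _ => by positivity) (hne e he), ?_⟩
  intro e he f hf hef hsum
  apply hef
  apply geomSum_injective le_rfl
  simp only [← two_mul_sum_two_pow_pred (hzero e he), ← two_mul_sum_two_pow_pred (hzero f hf),
    hsum]

lemma IsEdgeDiscriminator.card_le_sum {E : Finset (Finset ℕ)} {V : Finset ℕ} {lam : ℕ → ℕ}
    (hlam : IsEdgeDiscriminator E lam) (hE : ∀ e ∈ E, e ⊆ V) :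
    #E ≤ ∑ v ∈ V, lam v := by
  obtain ⟨hpos, hinj⟩ := hlam
  calc #E = #(E.image fun e => ∑ v ∈ e, lam v) :=
        (card_image_of_injOn fun e he f hf h =>
          Classical.byContradiction fun hef => hinj e he f hf hef h).symm
    _ ≤ #(Icc 1 (∑ v ∈ V, lam v)) := card_le_card fun n hn => by
        obtain ⟨e, he, rfl⟩ := mem_image.1 hn
        exact mem_Icc.2 ⟨hpos e he, sum_le_sum_of_subset (hE e he)⟩
    _ = ∑ v ∈ V, lam v := Nat.card_Icc _ _

theorem power_set_optimum_general (m : ℕ) :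
    (IsEdgeDiscriminator (powerEdges m) (fun i => 2 ^ (i - 1)) ∧
      ∑ v ∈ Finset.Icc 1 m, 2 ^ (v - 1) = 2 ^ m - 1) ∧
    (∀ lam : ℕ → ℕ, IsEdgeDiscriminator (powerEdges m) lam →
      2 ^ m - 1 ≤ ∑ v ∈ Finset.Icc 1 m, lam v) := by
  refine ⟨⟨isEdgeDiscriminator_two_pow_pred ?_ ?_, sum_Icc_two_pow_pred m⟩, fun lam hlam => ?_⟩
  · exact fun e he => (mem_powerEdges.1 he).2
  · exact fun e he h0 => by simpa using (mem_powerEdges.1 he).1 h0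
  · rw [← card_powerEdges]
    exact hlam.card_le_sum fun e he => (mem_powerEdges.1 he).1

theorem power_set_optimum (m : ℕ) (hm : 1 ≤ m) :
    (IsEdgeDiscriminator (powerEdges m) (fun i => 2 ^ (i - 1)) ∧
      ∑ v ∈ Finset.Icc 1 m, 2 ^ (v - 1) = 2 ^ m - 1) ∧
    (∀ lam : ℕ → ℕ, IsEdgeDiscriminator (powerEdges m) lam →
      2 ^ m - 1 ≤ ∑ v ∈ Finset.Icc 1 m, lam v) :=
  power_set_optimum_general m
end

section
/- Fix an integer m ≥ 2 and let P_m = (V, E) be the path with vertex set V = {1, 2, …, m} and hyperedges e_i = {i, i+1} for i = 1, …, m−1. Then the minimum weight of an edge-discriminator on P_m equals ⌈m(m−1)/4⌉; that is, there exists an edge-discriminator of weight ⌈m(m−1)/4⌉, and every edge-discriminator on P_m has weight at least ⌈m(m−1)/4⌉. -/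
/-- The edge set of the path on vertices `{1, …, m}`. -/
def pathEdges (m : ℕ) : Finset (Finset ℕ) :=
  (Finset.Icc 1 (m - 1)).image (fun i => ({i, i + 1} : Finset ℕ))

open Finset

theorem Finset.card_mul_card_add_one_le_two_mul_sum {s : Finset ℕ} (hs : 0 ∉ s) :
    #s * (#s + 1) ≤ 2 * ∑ x ∈ s, x := by
  induction s using Finset.induction_on_max with
  | empty => simp
  | insert a s hlt ih =>
    have ha : a ∉ s := fun h => lt_irrefl a (hlt a h)
    have hs' : 0 ∉ s := fun h => hs (mem_insert_of_mem h)
    have hcard : #s + 1 ≤ a := by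
      have hsub : s ⊆ Ico 1 a := fun x hx =>
        mem_Ico.2 ⟨Nat.pos_of_ne_zero (ne_of_mem_of_not_mem hx hs'), hlt x hx⟩
      have ha0 : a ≠ 0 := fun h => hs (h ▸ mem_insert_self a s)
      have hle := card_le_card hsub
      rw [Nat.card_Ico] at hle
      omega
    rw [card_insert_of_notMem ha, sum_insert ha]
    nlinarith [ih hs']

theorem Finset.sum_Icc_one_id_mul_two (n : ℕ) : (∑ i ∈ Icc 1 n, i) * 2 = n * (n + 1) := by
  induction n with
  | zero => rfl
  | succ n ih => rw [sum_Icc_succ_top (by omega), add_mul, ih]; ring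

section PathEdges

variable (lam : ℕ → ℕ)

theorem pair_succ_injective : Function.Injective (fun i : ℕ => ({i, i + 1} : Finset ℕ)) := by
  intro i j (h : ({i, i + 1} : Finset ℕ) = {j, j + 1})
  have hi : i ∈ ({j, j + 1} : Finset ℕ) := h ▸ mem_insert_self i {i + 1}
  have hj : j ∈ ({i, i + 1} : Finset ℕ) := h ▸ mem_insert_self j {j + 1}
  simp only [mem_insert, mem_singleton] at hi hj
  omega

theorem isEdgeDiscriminator_pathEdges_iff (m : ℕ) :
    IsEdgeDiscriminator (pathEdges m) lam ↔
      (∀ i ∈ Icc 1 (m - 1), 0 < lam i + lam (i + 1)) ∧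
        Set.InjOn (fun i => lam i + lam (i + 1)) (Icc 1 (m - 1)) := by
  have hsum (i : ℕ) : ∑ v ∈ ({i, i + 1} : Finset ℕ), lam v = lam i + lam (i + 1) :=
    sum_pair (Nat.succ_ne_self i).symm
  simp only [IsEdgeDiscriminator, pathEdges, forall_mem_image, hsum,
    pair_succ_injective.ne_iff]
  exact and_congr_right fun _ =>
    ⟨fun h _ hi _ hj => not_imp_not.1 (h hi hj), fun h _ hi _ hj => mt (h hi hj)⟩

theorem two_mul_sum_Icc_eq_sum_edges {m : ℕ} (hm : 1 ≤ m) :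
    2 * ∑ v ∈ Icc 1 m, lam v = ∑ i ∈ Icc 1 (m - 1), (lam i + lam (i + 1)) + lam 1 + lam m := by
  induction m, hm using Nat.le_induction with
  | base => simp [two_mul]
  | succ m hm ih =>
    obtain ⟨k, rfl⟩ : ∃ k, m = k + 1 := ⟨m - 1, by omega⟩
    rw [sum_Icc_succ_top (by omega) lam, Nat.add_sub_cancel,
      sum_Icc_succ_top (by omega) (fun i => lam i + lam (i + 1))]
    rw [Nat.add_sub_cancel] at ih
    omega

theorem mul_pred_le_four_mul_sum {m : ℕ} (h : IsEdgeDiscriminator (pathEdges m) lam) :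
    m * (m - 1) ≤ 4 * ∑ v ∈ Icc 1 m, lam v := by
  rcases Nat.eq_zero_or_pos m with rfl | hm
  · simp
  obtain ⟨hpos, hinj⟩ := (isEdgeDiscriminator_pathEdges_iff lam m).1 h
  set S := (Icc 1 (m - 1)).image (fun i => lam i + lam (i + 1))
  have hS0 : 0 ∉ S := by
    simp only [S, mem_image, not_exists, not_and]
    exact fun i hi => (hpos i hi).ne'
  have hcard : #S = m - 1 := by rw [card_image_of_injOn hinj, Nat.card_Icc]; omega
  have hsumS : ∑ x ∈ S, x = ∑ i ∈ Icc 1 (m - 1), (lam i + lam (i + 1)) := sum_image hinj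
  have hbound := card_mul_card_add_one_le_two_mul_sum hS0
  rw [hcard, hsumS, Nat.sub_add_cancel hm] at hbound
  have hdouble := two_mul_sum_Icc_eq_sum_edges lam hm
  rw [Nat.mul_comm]
  omega

end PathEdges

def pathLabel (m i : ℕ) : ℕ := if (m + i) % 2 = 0 then i / 2 % 2 else i - 1

theorem pathLabel_edge_injOn (m : ℕ) :
    Set.InjOn (fun i => pathLabel m i + pathLabel m (i + 1)) (Icc 1 (m - 1)) := by
  intro i hi j hj h
  simp only [coe_Icc, Set.mem_Icc] at hi hj
  simp only [pathLabel] at h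
  split_ifs at h <;> omega

theorem pathLabel_edge_mem {m i : ℕ} (hi : i ∈ Icc 1 (m - 1)) :
    pathLabel m i + pathLabel m (i + 1) ∈ Icc 1 (m - 1) := by
  rw [mem_Icc] at hi ⊢
  unfold pathLabel
  split_ifs <;> omega

theorem image_pathLabel_edge (m : ℕ) :
    (Icc 1 (m - 1)).image (fun i => pathLabel m i + pathLabel m (i + 1)) = Icc 1 (m - 1) := by
  refine eq_of_subset_of_card_le (image_subset_iff.2 fun i hi => pathLabel_edge_mem hi) ?_
  rw [card_image_of_injOn (pathLabel_edge_injOn m)]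

theorem isEdgeDiscriminator_pathLabel (m : ℕ) :
    IsEdgeDiscriminator (pathEdges m) (pathLabel m) := by
  refine (isEdgeDiscriminator_pathEdges_iff _ m).2 ⟨fun i hi => ?_, ?_⟩
  · exact (mem_Icc.1 (pathLabel_edge_mem hi)).1
  · exact pathLabel_edge_injOn m

theorem four_mul_sum_pathLabel (m : ℕ) :
    4 * ∑ v ∈ Icc 1 m, pathLabel m v = m * (m - 1) + 2 * (m / 2 % 2) := by
  rcases Nat.eq_zero_or_pos m with rfl | hm
  · simp
  have hedges : ∑ i ∈ Icc 1 (m - 1), (pathLabel m i + pathLabel m (i + 1)) =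
      ∑ i ∈ Icc 1 (m - 1), i := by
    rw [← sum_image (f := fun x => x) (pathLabel_edge_injOn m), image_pathLabel_edge]
  have hgauss := sum_Icc_one_id_mul_two (m - 1)
  rw [Nat.sub_add_cancel hm] at hgauss
  have hends : pathLabel m 1 + pathLabel m m = m / 2 % 2 := by
    unfold pathLabel; split_ifs <;> omega
  have hdouble := two_mul_sum_Icc_eq_sum_edges (pathLabel m) hm
  rw [Nat.mul_comm m]
  omega

theorem path_optimum_general (m : ℕ) :
    (∃ lam : ℕ → ℕ, IsEdgeDiscriminator (pathEdges m) lam ∧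
      ∑ v ∈ Finset.Icc 1 m, lam v = (m * (m - 1) + 3) / 4) ∧
    (∀ lam : ℕ → ℕ, IsEdgeDiscriminator (pathEdges m) lam →
      (m * (m - 1) + 3) / 4 ≤ ∑ v ∈ Finset.Icc 1 m, lam v) := by
  refine ⟨⟨pathLabel m, isEdgeDiscriminator_pathLabel m, ?_⟩, fun lam h => ?_⟩
  · have hweight := four_mul_sum_pathLabel m
    omega
  · have hbound := mul_pred_le_four_mul_sum lam h
    omega

/-- The minimum weight of an edge-discriminator on the path `P_m` is
`⌈m(m-1)/4⌉ = (m(m-1)+3)/4` (natural number division). -/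
theorem path_optimum (m : ℕ) (hm : 2 ≤ m) :
    (∃ lam : ℕ → ℕ, IsEdgeDiscriminator (pathEdges m) lam ∧
      ∑ v ∈ Finset.Icc 1 m, lam v = (m * (m - 1) + 3) / 4) ∧
    (∀ lam : ℕ → ℕ, IsEdgeDiscriminator (pathEdges m) lam →
      (m * (m - 1) + 3) / 4 ≤ ∑ v ∈ Finset.Icc 1 m, lam v) :=
  path_optimum_general m
end

section
/- Fix an integer m ≥ 4 with m ≡ 0 or 1 (mod 4), and let P_m = (V, E) be the path with vertex set V = {1, 2, …, m} and hyperedges e_i = {i, i+1} for i = 1, …, m−1. Then there exists an edge-discriminator λ on P_m such that λ(1) = 0, λ(m) = 2, the multiset of edge weights {ω_λ(e_i) : 1 ≤ i ≤ m−1} equals {1, 2, …, m−1}, and the total weight satisfies Σ_{v∈V} λ(v) = m(m−1)/4 + 1. -/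
def lamFun (a : ℕ) (i : ℕ) : ℕ :=
  if i ≤ a then i / 2
  else if (i - a) % 2 = 0 then a / 2 - (i - a) / 2
  else (a + 1) / 2 + 3 * ((i - a) / 2) + 1

def wFun (a : ℕ) (i : ℕ) : ℕ :=
  if i < a then i else if (i - a) % 2 = 0 then i + 1 else i - 1

lemma lam_add (a K i : ℕ) (ha : a / 2 = K + 2) (h1 : 1 ≤ i) (h2 : i ≤ a + 2*K - 1) :
    lamFun a i + lamFun a (i + 1) = wFun a i := by
  unfold lamFun wFun
  split_ifs <;> omega

lemma w_mem (a K i : ℕ) (ha : a / 2 = K + 2) (h1 : 1 ≤ i) (h2 : i ≤ a + 2*K - 1) :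
    1 ≤ wFun a i ∧ wFun a i ≤ a + 2*K - 1 := by
  unfold wFun; split_ifs <;> omega

lemma w_invol (a K i : ℕ) (ha : a / 2 = K + 2) (h1 : 1 ≤ i) (h2 : i ≤ a + 2*K - 1) :
    wFun a (wFun a i) = i := by
  unfold wFun; split_ifs <;> omega

lemma gauss (n : ℕ) : (∑ j ∈ Finset.Icc 1 n, j) * 2 = n * (n + 1) := by
  induction n with
  | zero => simp
  | succ n ih =>
    rw [Finset.sum_Icc_succ_top (by omega)]
    nlinarith [ih]

lemma gen (a K : ℕ) (ha : a / 2 = K + 2) :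
    ∃ lam : ℕ → ℕ, IsEdgeDiscriminator (pathEdges (a + 2*K)) lam ∧
      lam 1 = 0 ∧ lam (a + 2*K) = 2 ∧
      (Finset.Icc 1 (a + 2*K - 1)).image (fun i => lam i + lam (i + 1)) =
        Finset.Icc 1 (a + 2*K - 1) ∧
      ∑ v ∈ Finset.Icc 1 (a + 2*K), lam v = (a + 2*K) * (a + 2*K - 1) / 4 + 1 := by
  set m := a + 2*K with hm
  have hm4 : 4 ≤ m := by omega
  have hlam1 : lamFun a 1 = 0 := by unfold lamFun; split_ifs <;> omega
  have hlamm : lamFun a m = 2 := by unfold lamFun; split_ifs <;> omega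
  -- image fact
  have himg : (Finset.Icc 1 (m - 1)).image (fun i => lamFun a i + lamFun a (i + 1)) =
      Finset.Icc 1 (m - 1) := by
    ext j
    simp only [Finset.mem_image, Finset.mem_Icc]
    constructor
    · rintro ⟨i, ⟨hi1, hi2⟩, rfl⟩
      rw [lam_add a K i ha hi1 hi2]
      exact w_mem a K i ha hi1 hi2
    · intro hj
      have hw := w_mem a K j ha hj.1 hj.2
      refine ⟨wFun a j, hw, ?_⟩
      rw [lam_add a K _ ha hw.1 hw.2, w_invol a K j ha hj.1 hj.2]
  refine ⟨lamFun a, ⟨?_, ?_⟩, hlam1, hlamm, himg, ?_⟩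
  · intro e he
    simp only [pathEdges, Finset.mem_image, Finset.mem_Icc] at he
    obtain ⟨i, ⟨hi1, hi2⟩, rfl⟩ := he
    rw [Finset.sum_pair (by omega : i ≠ i + 1), lam_add a K i ha hi1 hi2]
    have := w_mem a K i ha hi1 hi2
    omega
  · intro e he f hf hef
    simp only [pathEdges, Finset.mem_image, Finset.mem_Icc] at he hf
    obtain ⟨i, ⟨hi1, hi2⟩, rfl⟩ := he
    obtain ⟨j, ⟨hj1, hj2⟩, rfl⟩ := hf
    rw [Finset.sum_pair (by omega : i ≠ i + 1), Finset.sum_pair (by omega : j ≠ j + 1),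
      lam_add a K i ha hi1 hi2, lam_add a K j ha hj1 hj2]
    intro hw
    apply hef
    have : i = j := by
      have h1 := w_invol a K i ha hi1 hi2
      have h2 := w_invol a K j ha hj1 hj2
      rw [hw] at h1; omega
    rw [this]
  · -- sum computation
    have hT := gauss (m - 1)
    set T := ∑ j ∈ Finset.Icc 1 (m - 1), j with hTdef
    have hP : m * (m - 1) = T * 2 := by
      rw [hT]
      have h1 : m - 1 + 1 = m := by omega
      rw [h1, Nat.mul_comm]
    set S := ∑ v ∈ Finset.Icc 1 m, lamFun a v with hSdef
    have hA : S = (∑ i ∈ Finset.Icc 1 (m - 1), lamFun a i) + lamFun a m := by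
      have h1 : m - 1 + 1 = m := by omega
      have h2 := Finset.sum_Icc_succ_top (a := 1) (b := m - 1) (by omega) (lamFun a)
      rw [h1] at h2
      exact h2
    have hIcc : Finset.Icc 1 m = insert 1 (Finset.Icc 2 m) := by
      ext x; simp only [Finset.mem_Icc, Finset.mem_insert]; omega
    have hB : S = lamFun a 1 + ∑ i ∈ Finset.Icc 2 m, lamFun a i := by
      rw [hSdef, hIcc, Finset.sum_insert (by simp)]
    have hshift : (∑ i ∈ Finset.Icc 1 (m - 1), lamFun a (i + 1)) =
        ∑ i ∈ Finset.Icc 2 m, lamFun a i := by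
      refine Finset.sum_bij' (fun i _ => i + 1) (fun j _ => j - 1) ?_ ?_ ?_ ?_ ?_
      · intro i hi; rw [Finset.mem_Icc] at hi ⊢; omega
      · intro j hj; rw [Finset.mem_Icc] at hj ⊢; omega
      · intro i hi; show i + 1 - 1 = i; omega
      · intro j hj; rw [Finset.mem_Icc] at hj; show j - 1 + 1 = j; omega
      · intro i hi; rfl
    have hsum : (∑ i ∈ Finset.Icc 1 (m - 1), (lamFun a i + lamFun a (i + 1))) = T := by
      rw [Finset.sum_congr rfl (fun i hi => by
        simp only [Finset.mem_Icc] at hi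
        exact lam_add a K i ha hi.1 hi.2)]
      rw [hTdef]
      refine Finset.sum_bij' (fun i _ => wFun a i) (fun j _ => wFun a j) ?_ ?_ ?_ ?_ ?_
      · intro i hi; rw [Finset.mem_Icc] at hi ⊢
        exact ⟨(w_mem a K i ha hi.1 hi.2).1, (w_mem a K i ha hi.1 hi.2).2⟩
      · intro j hj; rw [Finset.mem_Icc] at hj ⊢
        exact ⟨(w_mem a K j ha hj.1 hj.2).1, (w_mem a K j ha hj.1 hj.2).2⟩
      · intro i hi; rw [Finset.mem_Icc] at hi
        exact w_invol a K i ha hi.1 hi.2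
      · intro j hj; rw [Finset.mem_Icc] at hj
        exact w_invol a K j ha hj.1 hj.2
      · intro i hi; rfl
    rw [Finset.sum_add_distrib, hshift] at hsum
    omega

theorem path_special_discriminator (m : ℕ) (hm : 4 ≤ m)
    (hmod : m % 4 = 0 ∨ m % 4 = 1) :
    ∃ lam : ℕ → ℕ, IsEdgeDiscriminator (pathEdges m) lam ∧
      lam 1 = 0 ∧ lam m = 2 ∧
      (Finset.Icc 1 (m - 1)).image (fun i => lam i + lam (i + 1)) =
        Finset.Icc 1 (m - 1) ∧
      ∑ v ∈ Finset.Icc 1 m, lam v = m * (m - 1) / 4 + 1 := by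
  rcases hmod with h | h
  · have hg := gen (m / 2 + 2) (m / 4 - 1) (by omega)
    have he : m / 2 + 2 + 2 * (m / 4 - 1) = m := by omega
    rwa [he] at hg
  · have hg := gen ((m + 5) / 2) (m / 4 - 1) (by omega)
    have he : (m + 5) / 2 + 2 * (m / 4 - 1) = m := by omega
    rwa [he] at hg
end

section
/- Let p ≥ q ≥ 1 be integers and let K_{p,q} = (V, E) be the complete bipartite graph with parts P and Q, where |P| = p, |Q| = q, P ∩ Q = ∅, V = P ∪ Q, and hyperedges all two-element sets {u, v} with u ∈ P and v ∈ Q. Then the minimum weight of an edge-discriminator on K_{p,q} equals (2q + p(p − 1 + q(q − 1)))/2. -/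
/-- The edge set of the complete bipartite graph with parts `P` and `Q`. -/
def bipartiteEdges (P Q : Finset ℕ) : Finset (Finset ℕ) :=
  P.biUnion (fun u => Q.image (fun v => ({u, v} : Finset ℕ)))

/-! Label `P` by `0, …, p - 1` and `Q` by `1, 1 + p, …, 1 + (q - 1) p`: read in base `p`, the edge
weights are exactly `1, …, pq`, and the total weight is the claimed value.

Conversely, let `λ` be an edge-discriminator. Comparing the edges through a fixed vertex of `Q`
shows that `λ` is injective on `P`, so `2 λ(P) ≥ p (p - 1)`. The `pq` edge weights are distinct
positive integers with sum `q λ(P) + p λ(Q)`, so `2 (q λ(P) + p λ(Q)) ≥ pq (pq + 1)`. Adding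
`p - q ≥ 0` times the first inequality to the second gives
`2 p λ(V) ≥ p (2q + p (p - 1 + q (q - 1)))`. -/

open Finset

namespace Finset

theorem card_mul_pred_le_two_mul_sum (S : Finset ℕ) : #S * (#S - 1) ≤ 2 * ∑ n ∈ S, n := by
  induction S using Finset.induction_on_max with
  | empty => simp
  | insert a S ha ih =>
    have haS : a ∉ S := fun h => lt_irrefl a (ha a h)
    have hcard : #S ≤ a := by simpa using card_le_card fun x hx => mem_range.mpr (ha x hx)
    rw [sum_insert haS, card_insert_of_notMem haS, Nat.add_sub_cancel]
    rcases h : #S with _ | n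
    · simp
    · rw [h, Nat.add_sub_cancel] at ih
      linarith

theorem card_mul_succ_le_two_mul_sum (S : Finset ℕ) (h0 : 0 ∉ S) :
    #S * (#S + 1) ≤ 2 * ∑ n ∈ S, n := by
  -- adjoining `0` raises the cardinality by one without changing the sum
  simpa [card_insert_of_notMem h0, sum_insert h0, mul_comm] using
    card_mul_pred_le_two_mul_sum (insert 0 S)

variable {ι : Type*} {s : Finset ι} {f : ι → ℕ}

theorem card_mul_pred_le_two_mul_sum_of_injOn (hf : Set.InjOn f s) :
    #s * (#s - 1) ≤ 2 * ∑ x ∈ s, f x := by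
  classical
  simpa [card_image_of_injOn hf, sum_image hf] using card_mul_pred_le_two_mul_sum (s.image f)

theorem card_mul_succ_le_two_mul_sum_of_injOn (hf : Set.InjOn f s) (hpos : ∀ x ∈ s, 0 < f x) :
    #s * (#s + 1) ≤ 2 * ∑ x ∈ s, f x := by
  classical
  have h0 : 0 ∉ s.image f := by
    simpa using fun x hx => (hpos x hx).ne'
  simpa [card_image_of_injOn hf, sum_image hf] using card_mul_succ_le_two_mul_sum _ h0

theorem exists_bijOn_range {α : Type*} (s : Finset α) : ∃ g : α → ℕ, Set.BijOn g s (range #s) :=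
  s.finite_toSet.exists_bijOn_of_encard_eq (by
    rw [Set.encard_coe_eq_coe_finsetCard, Set.encard_coe_eq_coe_finsetCard, card_range])

end Finset

section Pairs

variable {α : Type*} {P Q : Finset α}

theorem sum_product_add {M : Type*} [AddCommMonoid M] (lam : α → M) :
    ∑ x ∈ P ×ˢ Q, (lam x.1 + lam x.2) = #Q • ∑ u ∈ P, lam u + #P • ∑ v ∈ Q, lam v := by
  simp [sum_product, sum_add_distrib, smul_sum]

variable [DecidableEq α]

theorem injOn_pair_product (hdisj : Disjoint P Q) :
    Set.InjOn (fun x : α × α => ({x.1, x.2} : Finset α)) (P ×ˢ Q : Finset (α × α)) := by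
  rintro ⟨u, v⟩ huv ⟨u', v'⟩ huv' h
  simp only [coe_product, Set.mem_prod, mem_coe] at huv huv' h
  have hu' : u' ∈ ({u, v} : Finset α) := h ▸ by simp
  have hv' : v' ∈ ({u, v} : Finset α) := h ▸ by simp
  simp only [mem_insert, mem_singleton] at hu' hv'
  have hPQ := disjoint_left.mp hdisj
  rcases hu' with rfl | rfl
  · rcases hv' with rfl | rfl
    · exact absurd huv'.2 (hPQ huv.1)
    · rfl
  · exact absurd huv.2 (hPQ huv'.1)

theorem sum_pair_of_mem_product {M : Type*} [AddCommMonoid M] (hdisj : Disjoint P Q)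
    (lam : α → M) {x : α × α} (hx : x ∈ P ×ˢ Q) : ∑ v ∈ {x.1, x.2}, lam v = lam x.1 + lam x.2 :=
  sum_pair <| ne_of_mem_of_not_mem (mem_product.mp hx).1 <|
    disjoint_right.mp hdisj (mem_product.mp hx).2

end Pairs

section Bipartite

variable {P Q : Finset ℕ}

theorem bipartiteEdges_eq_image (P Q : Finset ℕ) :
    bipartiteEdges P Q = (P ×ˢ Q).image fun x => {x.1, x.2} := by
  ext e
  simp [bipartiteEdges, eq_comm, and_assoc]

theorem isEdgeDiscriminator_bipartiteEdges_iff (hdisj : Disjoint P Q) {lam : ℕ → ℕ} :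
    IsEdgeDiscriminator (bipartiteEdges P Q) lam ↔
      (∀ x ∈ P ×ˢ Q, 0 < lam x.1 + lam x.2) ∧
        Set.InjOn (fun x : ℕ × ℕ => lam x.1 + lam x.2) (P ×ˢ Q : Finset (ℕ × ℕ)) := by
  have hsum (x) (hx : x ∈ P ×ˢ Q) := sum_pair_of_mem_product hdisj lam hx
  have hinj := injOn_pair_product hdisj
  simp only [IsEdgeDiscriminator, bipartiteEdges_eq_image, forall_mem_image]
  refine and_congr (forall₂_congr fun x hx => by rw [hsum x hx])
    ⟨fun h x hx y hy hxy => ?_, fun h x hx y hy hne => ?_⟩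
  · by_contra hne
    exact h hx hy (fun e => hne (hinj hx hy e)) (by rw [hsum x hx, hsum y hy]; exact hxy)
  · rw [hsum x hx, hsum y hy]
    exact fun e => hne (congrArg (fun x : ℕ × ℕ => ({x.1, x.2} : Finset ℕ)) (h hx hy e))

theorem IsEdgeDiscriminator.le_two_mul_weight_bipartiteEdges (hdisj : Disjoint P Q)
    (hQ : Q.Nonempty) (hQP : #Q ≤ #P) {lam : ℕ → ℕ}
    (hlam : IsEdgeDiscriminator (bipartiteEdges P Q) lam) :
    2 * #Q + #P * (#P - 1 + #Q * (#Q - 1)) ≤ 2 * ∑ v ∈ P ∪ Q, lam v := by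
  obtain ⟨hpos, hinj⟩ := (isEdgeDiscriminator_bipartiteEdges_iff hdisj).mp hlam
  obtain ⟨v₀, hv₀⟩ := hQ
  have hinjP : Set.InjOn lam P := fun u hu u' hu' h =>
    have hedge (x) (hx : x ∈ P) : (x, v₀) ∈ P ×ˢ Q := mem_product.mpr ⟨hx, hv₀⟩
    congrArg Prod.fst (hinj (hedge u hu) (hedge u' hu') (congrArg (· + lam v₀) h))
  have hvertices := card_mul_pred_le_two_mul_sum_of_injOn hinjP
  have hedges := card_mul_succ_le_two_mul_sum_of_injOn hinj hpos
  rw [card_product, sum_product_add, smul_eq_mul, smul_eq_mul] at hedges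
  rw [sum_union hdisj]
  set A := ∑ u ∈ P, lam u
  set B := ∑ v ∈ Q, lam v
  obtain ⟨d, hd⟩ := Nat.exists_eq_add_of_le hQP
  obtain ⟨r, hr⟩ := Nat.exists_eq_add_of_le' (card_pos.mpr ⟨v₀, hv₀⟩)
  have hP1 : #P - 1 = r + d := by omega
  have hQ1 : #Q - 1 = r := by omega
  refine Nat.le_of_mul_le_mul_left (?_ : #P * _ ≤ #P * _) (by omega)
  calc #P * (2 * #Q + #P * (#P - 1 + #Q * (#Q - 1)))
      = d * (#P * (#P - 1)) + #P * #Q * (#P * #Q + 1) := by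
        rw [hP1, hQ1, hd, hr]; ring
    _ ≤ d * (2 * A) + 2 * (#Q * A + #P * B) := by gcongr
    _ = #P * (2 * (A + B)) := by rw [hd]; ring

theorem exists_isEdgeDiscriminator_bipartiteEdges (hdisj : Disjoint P Q) :
    ∃ lam : ℕ → ℕ, IsEdgeDiscriminator (bipartiteEdges P Q) lam ∧
      2 * ∑ v ∈ P ∪ Q, lam v = 2 * #Q + #P * (#P - 1 + #Q * (#Q - 1)) := by
  obtain ⟨g, hg⟩ := P.exists_bijOn_range
  obtain ⟨h, hh⟩ := Q.exists_bijOn_range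
  set lam := fun x => if x ∈ P then g x else 1 + #P * h x
  have hlamP (u) (hu : u ∈ P) : lam u = g u := if_pos hu
  have hlamQ (v) (hv : v ∈ Q) : lam v = 1 + #P * h v := if_neg (disjoint_right.mp hdisj hv)
  have hgP (u) (hu : u ∈ P) : g u < #P := mem_range.mp (hg.mapsTo hu)
  refine ⟨lam, (isEdgeDiscriminator_bipartiteEdges_iff hdisj).mpr ⟨?_, ?_⟩, ?_⟩
  · intro x hx
    rw [hlamQ _ (mem_product.mp hx).2]
    omega
  · rintro ⟨u, v⟩ huv ⟨u', v'⟩ huv' heq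
    simp only [coe_product, Set.mem_prod, mem_coe] at huv huv'
    simp only [hlamP _ huv.1, hlamP _ huv'.1, hlamQ _ huv.2, hlamQ _ huv'.2] at heq
    have hdigits : g u = g u' ∧ h v = h v' := by
      have hp : 0 < #P := card_pos.mpr ⟨u, huv.1⟩
      obtain ⟨hdiv, hmod⟩ := (Nat.div_mod_unique hp).mpr ⟨rfl, hgP u huv.1⟩
      obtain ⟨hdiv', hmod'⟩ := (Nat.div_mod_unique hp).mpr ⟨rfl, hgP u' huv'.1⟩
      have : g u + #P * h v = g u' + #P * h v' := by omega
      rw [this] at hdiv hmod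
      exact ⟨hmod.symm.trans hmod', hdiv.symm.trans hdiv'⟩
    rw [hg.injOn huv.1 huv'.1 hdigits.1, hh.injOn huv.2 huv'.2 hdigits.2]
  · have hsumP : ∑ u ∈ P, lam u = ∑ i ∈ range #P, i :=
      sum_nbij g (fun _ hu => hg.mapsTo hu) hg.injOn hg.surjOn hlamP
    have hsumQ : ∑ v ∈ Q, lam v = ∑ j ∈ range #Q, (1 + #P * j) :=
      sum_nbij h (fun _ hv => hh.mapsTo hv) hh.injOn hh.surjOn hlamQ
    have hP := sum_range_id_mul_two #P
    have hQ := sum_range_id_mul_two #Q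
    rw [sum_union hdisj, hsumP, hsumQ, sum_add_distrib, ← mul_sum]
    simp only [sum_const, card_range, smul_eq_mul, mul_one]
    linear_combination hP + #P * hQ

end Bipartite

theorem complete_bipartite_optimum (p q : ℕ) (hq : 1 ≤ q) (hpq : q ≤ p)
    (P Q : Finset ℕ) (hP : P.card = p) (hQ : Q.card = q)
    (hdisj : Disjoint P Q) :
    IsLeast {w : ℕ | ∃ lam : ℕ → ℕ,
        IsEdgeDiscriminator (bipartiteEdges P Q) lam ∧
        ∑ v ∈ P ∪ Q, lam v = w}
      ((2 * q + p * (p - 1 + q * (q - 1))) / 2) := by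
  subst hP hQ
  constructor
  · obtain ⟨lam, hlam, hweight⟩ := exists_isEdgeDiscriminator_bipartiteEdges hdisj
    exact ⟨lam, hlam, by omega⟩
  · rintro w ⟨lam, hlam, rfl⟩
    have := hlam.le_two_mul_weight_bipartiteEdges hdisj (card_pos.mp hq) hpq
    omega
end
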